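/- In the reduction instance, let π be any path from a_1 to u and let S = { i ∈ {1,…,n} : b_i ∈ π }. Then the total length of π (the sum of ℓ over its edges) equals y_n + Σ_{i∈S} x_i. In particular, the minimum length of a path from a_1 to u is y_n, attained by traversing the lower part d_i, e_i of every hexagon, and traversing the upper part of hexagon i adds exactly x_i to the length. -/
import Mathlib


open MeasureTheory
open scoped Classical

/-- Vertices of the reduction instance: for each hexagon index `i` the vertices
`a i, b i, c i, d i, e i, f i`, plus the two special vertices `u` and `w`. -/
inductive RVert : Type
  | a : ℕ → RVert
  | b : ℕ → RVert
  | c : ℕ → RVert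
  | d : ℕ → RVert
  | e : ℕ → RVert
  | f : ℕ → RVert
  | u : RVert
  | w : RVert
deriving DecidableEq

/-- `κ_i = Σ_{j=1}^{i} x_j` (so `κ_0 = 0`). -/
def kap (x : ℕ → ℕ) (i : ℕ) : ℕ := ∑ j ∈ Finset.Icc 1 i, x j

/-- `y_i = Σ_{j=1}^{i-1} κ_j` (so `y_0 = y_1 = 0`). -/
def yv (x : ℕ → ℕ) (i : ℕ) : ℕ := ∑ j ∈ Finset.Icc 1 (i - 1), kap x j

/-- `α_i = x_i / κ_n`. -/
noncomputable def alphav (x : ℕ → ℕ) (n i : ℕ) : ℝ := (x i : ℝ) / (kap x n : ℝ)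

/-- Edges of the reduction instance: `a_i→b_i, b_i→c_i, c_i→f_i, a_i→d_i,
d_i→e_i, e_i→f_i` for `1 ≤ i ≤ n`, `f_i→a_{i+1}` for `i < n`, `f_n→u`, `u→w`. -/
def redE (n : ℕ) : RVert → RVert → Prop := fun p q =>
  (∃ i, 1 ≤ i ∧ i ≤ n ∧
    ((p = RVert.a i ∧ q = RVert.b i) ∨ (p = RVert.b i ∧ q = RVert.c i) ∨
     (p = RVert.c i ∧ q = RVert.f i) ∨ (p = RVert.a i ∧ q = RVert.d i) ∨
     (p = RVert.d i ∧ q = RVert.e i) ∨ (p = RVert.e i ∧ q = RVert.f i))) ∨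
  (∃ i, 1 ≤ i ∧ i < n ∧ p = RVert.f i ∧ q = RVert.a (i + 1)) ∨
  (p = RVert.f n ∧ q = RVert.u) ∨ (p = RVert.u ∧ q = RVert.w)

/-- Edge lengths: `ℓ(b_i, c_i) = κ_i`, `ℓ(d_i, e_i) = κ_{i-1}`, all other edges
have length `0`. -/
noncomputable def redLen (x : ℕ → ℕ) : RVert → RVert → ℝ := fun p q =>
  match p, q with
  | RVert.b i, RVert.c j => if i = j then (kap x i : ℝ) else 0
  | RVert.d i, RVert.e j => if i = j then (kap x (i - 1) : ℝ) else 0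
  | _, _ => 0

/-- Assistance intervals: `𝓘(b_i) = 𝓘(c_i) = {[y_i, y_i + α_i]}` for
`1 ≤ i ≤ n`, `𝓘(w) = {[y_n + K, y_n + K + 1]}`, and `𝓘` is empty elsewhere. -/
noncomputable def redI (x : ℕ → ℕ) (n K : ℕ) : RVert → Finset (ℝ × ℝ) := fun p =>
  match p with
  | RVert.b i =>
      if 1 ≤ i ∧ i ≤ n then {((yv x i : ℝ), (yv x i : ℝ) + alphav x n i)} else ∅
  | RVert.c i =>
      if 1 ≤ i ∧ i ≤ n then {((yv x i : ℝ), (yv x i : ℝ) + alphav x n i)} else ∅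
  | RVert.w => {((yv x n : ℝ) + K, (yv x n : ℝ) + K + 1)}
  | _ => ∅

/-- `v 0, v 1, …, v k` is a path in the reduction instance. -/
def rIsPath (n : ℕ) (v : ℕ → RVert) (k : ℕ) : Prop :=
  ∀ i, i < k → redE n (v i) (v (i + 1))

/-- `ℓ_π(v_i)`: length of the path from `v 0` to `v i`. -/
noncomputable def rPathLen (x : ℕ → ℕ) (v : ℕ → RVert) (i : ℕ) : ℝ :=
  ∑ j ∈ Finset.range i, redLen x (v j) (v (j + 1))

/-- `ℓ⁺_π(v_i)` (with the convention `ℓ(v_k, v_{k+1}) = 0`). -/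
noncomputable def rEllPlus (x : ℕ → ℕ) (v : ℕ → RVert) (k i : ℕ) : ℝ :=
  rPathLen x v i + (if i < k then redLen x (v i) (v (i + 1)) / 2 else 0)

/-- Reward at a vertex `p` between times `t` and `t'`:
`R(p, t, t') = Σ_{I ∈ 𝓘(p)} λ([t,t'] ∩ I)`. -/
noncomputable def rvReward (x : ℕ → ℕ) (n K : ℕ) (p : RVert) (t t' : ℝ) : ℝ :=
  ∑ q ∈ redI x n K p, (volume (Set.Icc t t' ∩ Set.Icc q.1 q.2)).toReal

/-- `T 0, …, T (k-1)` is a timing profile for the path `v 0, …, v k` with time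
horizon `H = y_n + K + 1`. -/
def rIsTP (x : ℕ → ℕ) (v : ℕ → RVert) (k : ℕ) (H : ℝ) (T : ℕ → ℝ) : Prop :=
  (1 ≤ k → rEllPlus x v k 0 ≤ T 0) ∧
  (∀ i, i + 2 ≤ k → T i + (rEllPlus x v k (i + 1) - rEllPlus x v k i) ≤ T (i + 1)) ∧
  (1 ≤ k → T (k - 1) + (rEllPlus x v k k - rEllPlus x v k (k - 1)) ≤ H)

/-- Reward of a timing profile over horizon `H`:
`R(π, T) = Σ_{i=0}^{k} R(v_i, t_{i-1}, t_i)` with `t_{-1} = 0`, `t_k = H`. -/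
noncomputable def rProfReward (x : ℕ → ℕ) (n K : ℕ) (v : ℕ → RVert) (k : ℕ)
    (H : ℝ) (T : ℕ → ℝ) : ℝ :=
  ∑ i ∈ Finset.range (k + 1),
    rvReward x n K (v i) (if i = 0 then 0 else T (i - 1)) (if i = k then H else T i)

/-- Admissibility: the robot leaves `u` by time `y_n + K` and the path does not
end at `u`. -/
def rAdmissible (x : ℕ → ℕ) (n K : ℕ) (v : ℕ → RVert) (k : ℕ) (T : ℕ → ℝ) : Prop :=
  (∀ i, i < k → v i = RVert.u → T i ≤ (yv x n : ℝ) + K) ∧ v k ≠ RVert.u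


section Aux

lemma succ_a {n i : ℕ} {q : RVert} (h : redE n (RVert.a i) q) :
    1 ≤ i ∧ i ≤ n ∧ (q = RVert.b i ∨ q = RVert.d i) := by
  rcases h with ⟨i', h1, h2, hc⟩ | ⟨i', h1, h2, hp, hq⟩ | ⟨hp, hq⟩ | ⟨hp, hq⟩ <;>
    first
    | (rcases hc with ⟨hp,hq⟩|⟨hp,hq⟩|⟨hp,hq⟩|⟨hp,hq⟩|⟨hp,hq⟩|⟨hp,hq⟩ <;> simp_all)
    | simp_all

lemma succ_b {n i : ℕ} {q : RVert} (h : redE n (RVert.b i) q) : q = RVert.c i := by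
  rcases h with ⟨i', h1, h2, hc⟩ | ⟨i', h1, h2, hp, hq⟩ | ⟨hp, hq⟩ | ⟨hp, hq⟩ <;>
    first
    | (rcases hc with ⟨hp,hq⟩|⟨hp,hq⟩|⟨hp,hq⟩|⟨hp,hq⟩|⟨hp,hq⟩|⟨hp,hq⟩ <;> simp_all)
    | simp_all

lemma succ_c {n i : ℕ} {q : RVert} (h : redE n (RVert.c i) q) : q = RVert.f i := by
  rcases h with ⟨i', h1, h2, hc⟩ | ⟨i', h1, h2, hp, hq⟩ | ⟨hp, hq⟩ | ⟨hp, hq⟩ <;>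
    first
    | (rcases hc with ⟨hp,hq⟩|⟨hp,hq⟩|⟨hp,hq⟩|⟨hp,hq⟩|⟨hp,hq⟩|⟨hp,hq⟩ <;> simp_all)
    | simp_all

lemma succ_d {n i : ℕ} {q : RVert} (h : redE n (RVert.d i) q) : q = RVert.e i := by
  rcases h with ⟨i', h1, h2, hc⟩ | ⟨i', h1, h2, hp, hq⟩ | ⟨hp, hq⟩ | ⟨hp, hq⟩ <;>
    first
    | (rcases hc with ⟨hp,hq⟩|⟨hp,hq⟩|⟨hp,hq⟩|⟨hp,hq⟩|⟨hp,hq⟩|⟨hp,hq⟩ <;> simp_all)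
    | simp_all

lemma succ_e {n i : ℕ} {q : RVert} (h : redE n (RVert.e i) q) : q = RVert.f i := by
  rcases h with ⟨i', h1, h2, hc⟩ | ⟨i', h1, h2, hp, hq⟩ | ⟨hp, hq⟩ | ⟨hp, hq⟩ <;>
    first
    | (rcases hc with ⟨hp,hq⟩|⟨hp,hq⟩|⟨hp,hq⟩|⟨hp,hq⟩|⟨hp,hq⟩|⟨hp,hq⟩ <;> simp_all)
    | simp_all

lemma succ_f {n i : ℕ} {q : RVert} (h : redE n (RVert.f i) q) :
    (i < n ∧ q = RVert.a (i + 1)) ∨ (i = n ∧ q = RVert.u) := by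
  rcases h with ⟨i', h1, h2, hc⟩ | ⟨i', h1, h2, hp, hq⟩ | ⟨hp, hq⟩ | ⟨hp, hq⟩ <;>
    first
    | (rcases hc with ⟨hp,hq⟩|⟨hp,hq⟩|⟨hp,hq⟩|⟨hp,hq⟩|⟨hp,hq⟩|⟨hp,hq⟩ <;> simp_all)
    | simp_all

lemma succ_u {n : ℕ} {q : RVert} (h : redE n RVert.u q) : q = RVert.w := by
  rcases h with ⟨i', h1, h2, hc⟩ | ⟨i', h1, h2, hp, hq⟩ | ⟨hp, hq⟩ | ⟨hp, hq⟩ <;>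
    first
    | (rcases hc with ⟨hp,hq⟩|⟨hp,hq⟩|⟨hp,hq⟩|⟨hp,hq⟩|⟨hp,hq⟩|⟨hp,hq⟩ <;> simp_all)
    | simp_all

lemma succ_w {n : ℕ} {q : RVert} (h : redE n RVert.w q) : False := by
  rcases h with ⟨i', h1, h2, hc⟩ | ⟨i', h1, h2, hp, hq⟩ | ⟨hp, hq⟩ | ⟨hp, hq⟩ <;>
    first
    | (rcases hc with ⟨hp,hq⟩|⟨hp,hq⟩|⟨hp,hq⟩|⟨hp,hq⟩|⟨hp,hq⟩|⟨hp,hq⟩ <;> simp_all)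
    | simp_all

/-- Indices along a path never decrease. -/
def idxOK (i : ℕ) : RVert → Prop
  | RVert.a j => i ≤ j
  | RVert.b j => i ≤ j
  | RVert.c j => i ≤ j
  | RVert.d j => i ≤ j
  | RVert.e j => i ≤ j
  | RVert.f j => i ≤ j
  | RVert.u => True
  | RVert.w => True

lemma edge_idxOK {n i : ℕ} {p q : RVert} (h : redE n p q) (hp : idxOK i p) :
    idxOK i q := by
  rcases h with ⟨i', h1, h2, hc⟩ | ⟨i', h1, h2, hp', hq⟩ | ⟨hp', hq⟩ | ⟨hp', hq⟩
  · rcases hc with ⟨hp',hq⟩|⟨hp',hq⟩|⟨hp',hq⟩|⟨hp',hq⟩|⟨hp',hq⟩|⟨hp',hq⟩ <;>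
      subst hp' <;> subst hq <;> simpa [idxOK] using hp
  · subst hp'; subst hq; simp only [idxOK] at hp ⊢; omega
  · subst hq; simp [idxOK]
  · subst hq; simp [idxOK]

lemma path_idxOK {n i k : ℕ} {v : ℕ → RVert} (hpath : rIsPath n v k)
    (h0 : idxOK i (v 0)) : ∀ m, m ≤ k → idxOK i (v m) := by
  intro m
  induction m with
  | zero => intro; exact h0
  | succ m ih => intro hm; exact edge_idxOK (hpath m (by omega)) (ih (by omega))

lemma u_last {n k : ℕ} {v : ℕ → RVert} (hpath : rIsPath n v k)
    (hk : v k = RVert.u) : ∀ m, m < k → v m ≠ RVert.u := by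
  intro m hm hu
  have h1 : v (m + 1) = RVert.w := succ_u (hu ▸ hpath m hm)
  rcases Nat.lt_or_ge (m + 1) k with h | h
  · exact succ_w (h1 ▸ hpath (m + 1) h)
  · have hme : m + 1 = k := by omega
    rw [hme] at h1; rw [h1] at hk; exact RVert.noConfusion hk

lemma kap_succ (x : ℕ → ℕ) {i : ℕ} (hi : 1 ≤ i) :
    kap x i = kap x (i - 1) + x i := by
  obtain ⟨m, rfl⟩ : ∃ m, i = m + 1 := ⟨i - 1, by omega⟩
  simp only [kap, Nat.add_sub_cancel]
  exact Finset.sum_Icc_succ_top (by omega) x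

lemma yv_eq (x : ℕ → ℕ) (n : ℕ) :
    (∑ j ∈ Finset.Icc 1 n, kap x (j - 1)) = yv x n := by
  induction n with
  | zero => simp [yv]
  | succ n ih =>
    rw [Finset.sum_Icc_succ_top (by omega), ih, Nat.add_sub_cancel]
    unfold yv
    rcases Nat.eq_zero_or_pos n with rfl | hn
    · simp [kap]
    · rw [Nat.add_sub_cancel]
      have hne : n = (n - 1) + 1 := by omega
      rw [hne, Finset.sum_Icc_succ_top (by omega)]
      congr 1

lemma main_len (n : ℕ) (x : ℕ → ℕ) :
    ∀ k, ∀ v : ℕ → RVert, ∀ i, rIsPath n v k → v 0 = RVert.a i → v k = RVert.u →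
    (∑ j ∈ Finset.range k, redLen x (v j) (v (j + 1))) =
      (∑ j ∈ Finset.Icc i n, (kap x (j - 1) : ℝ)) +
        ∑ j ∈ (Finset.Icc i n).filter (fun j => ∃ m ≤ k, v m = RVert.b j), (x j : ℝ) := by
  intro k
  induction k using Nat.strong_induction_on with
  | _ k ih =>
  intro v i hpath h0 hk
  have hk1 : 1 ≤ k := by
    rcases Nat.eq_zero_or_pos k with rfl | h
    · rw [h0] at hk; exact RVert.noConfusion hk
    · exact h
  have e0 := hpath 0 (by omega); rw [h0] at e0
  obtain ⟨hi1, hin, hv1⟩ := succ_a e0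
  rcases hv1 with hv1 | hv1
  all_goals (
    have hk2 : 2 ≤ k := by
      by_contra h
      have hke : k = 1 := by omega
      rw [hke, hv1] at hk; exact RVert.noConfusion hk
    have e1 := hpath 1 (by omega); rw [hv1] at e1
    first
    | (have hv2 := succ_b e1)
    | (have hv2 := succ_d e1)
    have hk3 : 3 ≤ k := by
      by_contra h
      have hke : k = 2 := by omega
      rw [hke, hv2] at hk; exact RVert.noConfusion hk
    have e2 := hpath 2 (by omega); rw [hv2] at e2
    first
    | (have hv3 := succ_c e2)
    | (have hv3 := succ_e e2)
    have hk4 : 4 ≤ k := by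
      by_contra h
      have hke : k = 3 := by omega
      rw [hke, hv3] at hk; exact RVert.noConfusion hk
    have e3 := hpath 3 (by omega); rw [hv3] at e3
    norm_num at hv1 hv2 hv3)
  -- CASE b: v 1 = b i
  · rcases succ_f e3 with ⟨hilt, hv4⟩ | ⟨rfl, hv4⟩
    · -- recursive case i < n
      have hpath' : rIsPath n (fun m => v (m + 4)) (k - 4) := by
        intro m hm
        have h := hpath (m + 4) (by omega)
        have hee : m + 4 + 1 = m + 1 + 4 := by omega
        rw [hee] at h; exact h
      have h0' : (fun m => v (m + 4)) 0 = RVert.a (i + 1) := by simpa using hv4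
      have hk' : (fun m => v (m + 4)) (k - 4) = RVert.u := by
        show v (k - 4 + 4) = RVert.u
        rw [Nat.sub_add_cancel hk4]; exact hk
      have IH := ih (k - 4) (by omega) (fun m => v (m + 4)) (i + 1) hpath' h0' hk'
      have hsplit : (∑ j ∈ Finset.range k, redLen x (v j) (v (j + 1))) =
          (∑ j ∈ Finset.range 4, redLen x (v j) (v (j + 1))) +
            ∑ j ∈ Finset.range (k - 4), redLen x (v (j + 4)) (v (j + 1 + 4)) := by
        rw [← Finset.sum_range_add_sum_Ico _ hk4]
        congr 1
        rw [Finset.sum_Ico_eq_sum_range]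
        apply Finset.sum_congr rfl
        intro j _
        rw [show 4 + j + 1 = j + 1 + 4 by omega, show 4 + j = j + 4 by omega]
      have hfour : (∑ j ∈ Finset.range 4, redLen x (v j) (v (j + 1))) = (kap x i : ℝ) := by
        simp only [Finset.sum_range_succ, Finset.sum_range_zero, zero_add]
        norm_num
        rw [h0, hv1, hv2, hv3, hv4]
        simp [redLen]
      have hIcc : Finset.Icc i n = insert i (Finset.Icc (i + 1) n) := by
        ext m; simp only [Finset.mem_Icc, Finset.mem_insert]; omega
      have hnm : i ∉ Finset.Icc (i + 1) n := by simp
      have hfc : ((Finset.Icc (i + 1) n).filter (fun j => ∃ m ≤ k, v m = RVert.b j))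
          = (Finset.Icc (i + 1) n).filter
              (fun j => ∃ m ≤ k - 4, (fun m => v (m + 4)) m = RVert.b j) := by
        apply Finset.filter_congr
        intro j hj
        simp only [Finset.mem_Icc] at hj
        constructor
        · rintro ⟨m, hm, hbm⟩
          have hm4 : 4 ≤ m := by
            by_contra hlt
            interval_cases m <;> simp_all
          refine ⟨m - 4, by omega, ?_⟩
          show v (m - 4 + 4) = _
          rw [Nat.sub_add_cancel hm4]; exact hbm
        · rintro ⟨m, hm, hbm⟩
          exact ⟨m + 4, by omega, hbm⟩
      rw [hsplit, hfour, IH, hIcc, Finset.sum_insert hnm, Finset.filter_insert,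
        if_pos ⟨1, by omega, hv1⟩,
        Finset.sum_insert (fun h => hnm (Finset.mem_filter.mp h).1), hfc]
      have hks := kap_succ x hi1
      push_cast [hks]
      ring
    · -- base case i = n
      have hke : k = 4 := by
        by_contra h
        exact u_last hpath hk 4 (by omega) hv4
      subst hke
      rw [Finset.Icc_self, Finset.filter_singleton, if_pos ⟨1, by omega, hv1⟩]
      have hfour : (∑ j ∈ Finset.range 4, redLen x (v j) (v (j + 1))) = (kap x i : ℝ) := by
        simp only [Finset.sum_range_succ, Finset.sum_range_zero, zero_add]
        norm_num
        rw [h0, hv1, hv2, hv3, hv4]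
        simp [redLen]
      rw [hfour]
      have hks := kap_succ x hi1
      simp only [Finset.sum_singleton]
      push_cast [hks]
      ring
  -- CASE d: v 1 = d i
  · rcases succ_f e3 with ⟨hilt, hv4⟩ | ⟨rfl, hv4⟩
    · -- recursive case i < n
      have hpath' : rIsPath n (fun m => v (m + 4)) (k - 4) := by
        intro m hm
        have h := hpath (m + 4) (by omega)
        have hee : m + 4 + 1 = m + 1 + 4 := by omega
        rw [hee] at h; exact h
      have h0' : (fun m => v (m + 4)) 0 = RVert.a (i + 1) := by simpa using hv4
      have hk' : (fun m => v (m + 4)) (k - 4) = RVert.u := by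
        show v (k - 4 + 4) = RVert.u
        rw [Nat.sub_add_cancel hk4]; exact hk
      have IH := ih (k - 4) (by omega) (fun m => v (m + 4)) (i + 1) hpath' h0' hk'
      have hsplit : (∑ j ∈ Finset.range k, redLen x (v j) (v (j + 1))) =
          (∑ j ∈ Finset.range 4, redLen x (v j) (v (j + 1))) +
            ∑ j ∈ Finset.range (k - 4), redLen x (v (j + 4)) (v (j + 1 + 4)) := by
        rw [← Finset.sum_range_add_sum_Ico _ hk4]
        congr 1
        rw [Finset.sum_Ico_eq_sum_range]
        apply Finset.sum_congr rfl
        intro j _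
        rw [show 4 + j + 1 = j + 1 + 4 by omega, show 4 + j = j + 4 by omega]
      have hfour : (∑ j ∈ Finset.range 4, redLen x (v j) (v (j + 1)))
          = (kap x (i - 1) : ℝ) := by
        simp only [Finset.sum_range_succ, Finset.sum_range_zero, zero_add]
        norm_num
        rw [h0, hv1, hv2, hv3, hv4]
        simp [redLen]
      have hIcc : Finset.Icc i n = insert i (Finset.Icc (i + 1) n) := by
        ext m; simp only [Finset.mem_Icc, Finset.mem_insert]; omega
      have hnm : i ∉ Finset.Icc (i + 1) n := by simp
      have hPi : ¬ ∃ m ≤ k, v m = RVert.b i := by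
        rintro ⟨m, hm, hbm⟩
        rcases Nat.lt_or_ge m 4 with hlt | hge
        · interval_cases m <;> simp_all
        · have hok : idxOK (i + 1) ((fun m => v (m + 4)) (m - 4)) :=
            path_idxOK hpath'
              (by have h4 : v (0 + 4) = RVert.a (i + 1) := h0'
                  show idxOK (i + 1) (v (0 + 4))
                  rw [h4]
                  simp [idxOK]) (m - 4) (by omega)
          have hvv : (fun m => v (m + 4)) (m - 4) = v m := by
            show v (m - 4 + 4) = v m
            congr 1; omega
          rw [hvv, hbm] at hok
          simp only [idxOK] at hok; omega
      have hfc : ((Finset.Icc (i + 1) n).filter (fun j => ∃ m ≤ k, v m = RVert.b j))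
          = (Finset.Icc (i + 1) n).filter
              (fun j => ∃ m ≤ k - 4, (fun m => v (m + 4)) m = RVert.b j) := by
        apply Finset.filter_congr
        intro j hj
        simp only [Finset.mem_Icc] at hj
        constructor
        · rintro ⟨m, hm, hbm⟩
          have hm4 : 4 ≤ m := by
            by_contra hlt
            interval_cases m <;> simp_all
          refine ⟨m - 4, by omega, ?_⟩
          show v (m - 4 + 4) = _
          rw [Nat.sub_add_cancel hm4]; exact hbm
        · rintro ⟨m, hm, hbm⟩
          exact ⟨m + 4, by omega, hbm⟩
      rw [hsplit, hfour, IH, hIcc, Finset.sum_insert hnm, Finset.filter_insert,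
        if_neg hPi, hfc]
      push_cast
      ring
    · -- base case i = n
      have hke : k = 4 := by
        by_contra h
        exact u_last hpath hk 4 (by omega) hv4
      subst hke
      have hPi : ¬ ∃ m ≤ 4, v m = RVert.b i := by
        rintro ⟨m, hm, hbm⟩
        interval_cases m <;> simp_all
      rw [Finset.Icc_self, Finset.filter_singleton, if_neg hPi]
      have hfour : (∑ j ∈ Finset.range 4, redLen x (v j) (v (j + 1)))
          = (kap x (i - 1) : ℝ) := by
        simp only [Finset.sum_range_succ, Finset.sum_range_zero, zero_add]
        norm_num
        rw [h0, hv1, hv2, hv3, hv4]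
        simp [redLen]
      rw [hfour]
      simp

end Aux

/-- **path lengths in the reduction instance.** For any path `π`
from `a_1` to `u`, with `S = { i : b_i ∈ π }`, the total length of `π` equals
`y_n + Σ_{i ∈ S} x_i`. -/
theorem stmt11 (n : ℕ) (hn : 1 ≤ n) (x : ℕ → ℕ)
    (hx : ∀ i, 1 ≤ i → i ≤ n → 0 < x i)
    (hmono : ∀ i j, 1 ≤ i → i ≤ j → j ≤ n → x i ≤ x j)
    (K : ℕ) (hK : 0 < K) (hKn : K ≤ kap x n)
    (v : ℕ → RVert) (k : ℕ) (hpath : rIsPath n v k)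
    (h0 : v 0 = RVert.a 1) (hk : v k = RVert.u) :
    (∑ j ∈ Finset.range k, redLen x (v j) (v (j + 1))) =
      (yv x n : ℝ) +
        ∑ i ∈ (Finset.Icc 1 n).filter (fun i => ∃ j ≤ k, v j = RVert.b i), (x i : ℝ) := by
  have h := main_len n x k v 1 hpath h0 hk
  rw [h]
  congr 1
  rw [← yv_eq x n]
  push_cast
  rfl
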